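/- For a weak S-structure (f, Q, ξ_i, η^i, g), for all vector fields X, Y and each i: N^(5)(Y, ξ_i, fX) − N^(5)(X, ξ_i, fY) = 2 g((h_i^* f + f h_i) fX, fY). -/

import Mathlib

/-!
An algebraic model of the calculus of smooth vector fields on a smooth manifold
`M^{2n+p}`: `F` plays the role of the ordered commutative `ℝ`-algebra `C^∞(M)` of
smooth real-valued functions, and `V` the `F`-module `𝔛(M)` of smooth vector fields,
equipped with the derivation action `D` of vector fields on functions, the Lie
bracket of vector fields, a Riemannian metric `g` (a symmetric, `F`-bilinear,
positive-definite form) and its Levi-Civita connection `nabla` (the unique metric,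
torsion-free affine connection of `g`).
-/

noncomputable section

structure RiemannCalculus (F V : Type*) [CommRing F] [PartialOrder F] [IsOrderedRing F] [Algebra ℝ F]
    [AddCommGroup V] [Module F V] where
  /-- the derivation action `X φ` of a vector field `X` on a function `φ` -/
  D : V → F → F
  D_add_left : ∀ X Y φ, D (X + Y) φ = D X φ + D Y φ
  D_smul_left : ∀ (ψ : F) (X : V) (φ : F), D (ψ • X) φ = ψ * D X φ
  D_add_right : ∀ (X : V) (φ ψ : F), D X (φ + ψ) = D X φ + D X ψ
  D_mul_right : ∀ (X : V) (φ ψ : F), D X (φ * ψ) = φ * D X ψ + ψ * D X φ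
  D_algebraMap : ∀ (X : V) (r : ℝ), D X (algebraMap ℝ F r) = 0
  /-- the Lie bracket `[X, Y]` of vector fields -/
  bracket : V → V → V
  bracket_add_left : ∀ X Y Z, bracket (X + Y) Z = bracket X Z + bracket Y Z
  bracket_antisymm : ∀ X Y, bracket X Y = -bracket Y X
  bracket_leibniz : ∀ (X : V) (φ : F) (Y : V),
    bracket X (φ • Y) = φ • bracket X Y + D X φ • Y
  bracket_jacobi : ∀ X Y Z,
    bracket X (bracket Y Z) = bracket (bracket X Y) Z + bracket Y (bracket X Z)
  D_bracket : ∀ X Y φ, D (bracket X Y) φ = D X (D Y φ) - D Y (D X φ)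
  /-- the Riemannian metric `g` -/
  g : V → V → F
  g_symm : ∀ X Y, g X Y = g Y X
  g_add_left : ∀ X Y Z, g (X + Y) Z = g X Z + g Y Z
  g_smul_left : ∀ (φ : F) (X Y : V), g (φ • X) Y = φ * g X Y
  g_nonneg : ∀ X, 0 ≤ g X X
  g_definite : ∀ X, g X X = 0 → X = 0
  /-- the Levi-Civita connection `∇` of `g` -/
  nabla : V → V → V
  nabla_add_left : ∀ X Y Z, nabla (X + Y) Z = nabla X Z + nabla Y Z
  nabla_smul_left : ∀ (φ : F) (X Y : V), nabla (φ • X) Y = φ • nabla X Y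
  nabla_add_right : ∀ X Y Z, nabla X (Y + Z) = nabla X Y + nabla X Z
  nabla_leibniz : ∀ (X : V) (φ : F) (Y : V),
    nabla X (φ • Y) = φ • nabla X Y + D X φ • Y
  nabla_metric : ∀ X Y Z, D X (g Y Z) = g (nabla X Y) Z + g Y (nabla X Z)
  nabla_torsion_free : ∀ X Y, nabla X Y - nabla Y X = bracket X Y

/-- A metric weak `f`-structure `(f, Q, ξ_i, η^i, g)` on a smooth manifold `M^{2n+p}`
(Rovenski–Wolak): `f` is a `(1,1)`-tensor field of rank `2n`, `Q` a nonsingular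
`(1,1)`-tensor field, `ξ_1, …, ξ_p` vector fields spanning `ker f`, and `η^1, …, η^p`
the dual `1`-forms, satisfying `f³ + f∘Q = 0`, `Q ξᵢ = ξᵢ`,
`f² = -Q + Σᵢ ηⁱ ⊗ ξᵢ`, `ηⁱ(ξⱼ) = δⁱⱼ`, together with a compatible Riemannian
metric: `g(fX, fY) = g(X, QY) - Σᵢ ηⁱ(X) ηⁱ(QY)`. -/
structure MetricWeakFStructure (p : ℕ) (F V : Type*) [CommRing F] [PartialOrder F] [IsOrderedRing F] [Algebra ℝ F]
    [AddCommGroup V] [Module F V] extends RiemannCalculus F V where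
  f : V →ₗ[F] V
  Q : V →ₗ[F] V
  ξ : Fin p → V
  η : Fin p → V →ₗ[F] F
  Q_nonsingular : Function.Bijective Q
  f_cubed : ∀ X, f (f (f X)) + f (Q X) = 0
  Q_xi : ∀ i, Q (ξ i) = ξ i
  f_squared : ∀ X, f (f X) = -Q X + ∑ i, η i X • ξ i
  eta_xi : ∀ i j, η i (ξ j) = if i = j then (1 : F) else 0
  /-- the `ηⁱ` are the coframe dual to the `ξᵢ` w.r.t. the splitting
  `TM = f(TM) ⊕ ker f` (equivalently, `ηⁱ ∘ f = 0`). -/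
  eta_Q : ∀ i X, η i (Q X) = η i X
  /-- the `ξᵢ` span `ker f` -/
  ker_f_spanned : ∀ X, f X = 0 → X ∈ Submodule.span F (Set.range ξ)
  compatible : ∀ X Y, g (f X) (f Y) = g X (Q Y) - ∑ i, η i X * η i (Q Y)

namespace MetricWeakFStructure

variable {p : ℕ} {F V : Type*} [CommRing F] [PartialOrder F] [IsOrderedRing F] [Algebra ℝ F]
  [AddCommGroup V] [Module F V] (S : MetricWeakFStructure p F V)

/-- the fundamental 2-form `Φ(X,Y) = g(X, fY)` -/
def Phi (X Y : V) : F := S.g X (S.f Y)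

/-- `dηⁱ(X,Y) = (1/2){X(ηⁱ(Y)) - Y(ηⁱ(X)) - ηⁱ([X,Y])}` -/
def dEta (i : Fin p) (X Y : V) : F :=
  algebraMap ℝ F (1 / 2) *
    (S.D X (S.η i Y) - S.D Y (S.η i X) - S.η i (S.bracket X Y))

/-- `dΦ(X,Y,Z) = (1/3){XΦ(Y,Z) + YΦ(Z,X) + ZΦ(X,Y) - Φ([X,Y],Z) - Φ([Z,X],Y) - Φ([Y,Z],X)}` -/
def dPhi (X Y Z : V) : F :=
  algebraMap ℝ F (1 / 3) *
    (S.D X (S.Phi Y Z) + S.D Y (S.Phi Z X) + S.D Z (S.Phi X Y)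
      - S.Phi (S.bracket X Y) Z - S.Phi (S.bracket Z X) Y - S.Phi (S.bracket Y Z) X)

/-- the Nijenhuis torsion `[f,f](X,Y) = f²[X,Y] + [fX,fY] - f[fX,Y] - f[X,fY]` -/
def nijenhuis (X Y : V) : V :=
  S.f (S.f (S.bracket X Y)) + S.bracket (S.f X) (S.f Y)
    - S.f (S.bracket (S.f X) Y) - S.f (S.bracket X (S.f Y))

/-- `N⁽¹⁾ = [f,f] + 2 Σᵢ dηⁱ ⊗ ξᵢ` -/
def N1 (X Y : V) : V := S.nijenhuis X Y + ∑ i, (2 * S.dEta i X Y) • S.ξ i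

/-- the Lie derivative of `f`: `(£_Z f)X = [Z, fX] - f[Z,X]` -/
def lieD_f (Z X : V) : V := S.bracket Z (S.f X) - S.f (S.bracket Z X)

/-- the Lie derivative of `ηʲ`: `(£_Z ηʲ)X = Z(ηʲ(X)) - ηʲ([Z,X])` -/
def lieD_eta (j : Fin p) (Z X : V) : F := S.D Z (S.η j X) - S.η j (S.bracket Z X)

/-- the Lie derivative of `g`: `(£_Z g)(X,Y) = Z(g(X,Y)) - g([Z,X],Y) - g(X,[Z,Y])` -/
def lieD_g (Z X Y : V) : F :=
  S.D Z (S.g X Y) - S.g (S.bracket Z X) Y - S.g X (S.bracket Z Y)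

/-- `N⁽²⁾ᵢ(X,Y) = (£_{fX} ηⁱ)Y - (£_{fY} ηⁱ)X` -/
def N2 (i : Fin p) (X Y : V) : F := S.lieD_eta i (S.f X) Y - S.lieD_eta i (S.f Y) X

/-- `N⁽³⁾ᵢ = £_{ξᵢ} f` -/
def N3 (i : Fin p) (X : V) : V := S.lieD_f (S.ξ i) X

/-- `N⁽⁴⁾ᵢⱼ = £_{ξᵢ} ηʲ` -/
def N4 (i j : Fin p) (X : V) : F := S.lieD_eta j (S.ξ i) X

/-- `Q̃ = Q - id` -/
def Qt (X : V) : V := S.Q X - X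

/-- `X^⊤ = X - Σᵢ ηⁱ(X) ξᵢ`, the `f(TM)`-component of `X` -/
def top (X : V) : V := X - ∑ i, S.η i X • S.ξ i

/-- `N⁽⁵⁾(X,Y,Z) = (fZ)(g(X^⊤,Q̃Y)) - (fY)(g(X^⊤,Q̃Z)) + g([X,fZ]^⊤,Q̃Y)
  - g([X,fY]^⊤,Q̃Z) + g([Y,fZ]^⊤ - [Z,fY]^⊤ - f[Y,Z], Q̃X)` -/
def N5 (X Y Z : V) : F :=
  S.D (S.f Z) (S.g (S.top X) (S.Qt Y)) - S.D (S.f Y) (S.g (S.top X) (S.Qt Z))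
    + S.g (S.top (S.bracket X (S.f Z))) (S.Qt Y)
    - S.g (S.top (S.bracket X (S.f Y))) (S.Qt Z)
    + S.g (S.top (S.bracket Y (S.f Z)) - S.top (S.bracket Z (S.f Y))
        - S.f (S.bracket Y Z)) (S.Qt X)

/-- the covariant derivative of `f`: `(∇_X f)Y = ∇_X(fY) - f(∇_X Y)` -/
def nablaF (X Y : V) : V := S.nabla X (S.f Y) - S.f (S.nabla X Y)

/-- `hᵢ = (1/2) £_{ξᵢ} f` -/
def hT (i : Fin p) (X : V) : V := algebraMap ℝ F (1 / 2) • S.N3 i X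

/-- a vector field `Z` is Killing if `£_Z g = 0` -/
def IsKilling (Z : V) : Prop := ∀ X Y : V, S.lieD_g Z X Y = 0

/-- the structure is normal if `N⁽¹⁾ = 0` -/
def Normal : Prop := ∀ X Y : V, S.N1 X Y = 0

/-- a weak K-structure: normal with `dΦ = 0` -/
def WeakK : Prop := S.Normal ∧ ∀ X Y Z : V, S.dPhi X Y Z = 0

/-- a weak almost S-structure: `dηⁱ = Φ` for all `i` -/
def WeakAlmostS : Prop := ∀ (i : Fin p) (X Y : V), S.dEta i X Y = S.Phi X Y

/-- a weak S-structure: a weak K-structure with `dηⁱ = Φ` for all `i` -/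
def WeakS : Prop := S.WeakK ∧ S.WeakAlmostS

/-- a weak almost C-structure: `dΦ = 0` and `dηⁱ = 0` for all `i` -/
def WeakAlmostC : Prop :=
  (∀ X Y Z : V, S.dPhi X Y Z = 0) ∧ ∀ (i : Fin p) (X Y : V), S.dEta i X Y = 0

/-- a weak C-structure: a weak K-structure with `dηⁱ = 0` for all `i` -/
def WeakC : Prop := S.WeakK ∧ ∀ (i : Fin p) (X Y : V), S.dEta i X Y = 0

end MetricWeakFStructure

namespace MetricWeakFStructure

section Aux

variable {p : ℕ} {F V : Type*} [CommRing F] [PartialOrder F] [IsOrderedRing F] [Algebra ℝ F]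
  [AddCommGroup V] [Module F V] (S : MetricWeakFStructure p F V)

lemma D_zero_right (X : V) : S.D X 0 = 0 := by
  have h := S.D_add_right X 0 0
  simpa using h

lemma D_zero_left (φ : F) : S.D 0 φ = 0 := by
  have h := S.D_smul_left (0 : F) 0 φ
  simpa using h

lemma g_zero_left (X : V) : S.g 0 X = 0 := by
  have h := S.g_smul_left (0 : F) 0 X
  simpa using h

lemma g_zero_right (X : V) : S.g X 0 = 0 := by
  rw [S.g_symm]; exact S.g_zero_left X

lemma bracket_zero_right (X : V) : S.bracket X 0 = 0 := by
  have h := S.bracket_leibniz X (0 : F) 0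
  simpa [S.D_zero_right] using h

lemma f_xi (i : Fin p) : S.f (S.ξ i) = 0 := by
  have h2 : S.f (S.f (S.ξ i)) = 0 := by
    rw [S.f_squared (S.ξ i), S.Q_xi i]
    have : (∑ j, S.η j (S.ξ i) • S.ξ j) = S.ξ i := by
      simp [S.eta_xi]
    rw [this]; abel
  have h3 := S.f_cubed (S.ξ i)
  rw [h2, map_zero, S.Q_xi i, zero_add] at h3
  exact h3

lemma eta_f (k : Fin p) (X : V) : S.η k (S.f X) = 0 := by
  obtain ⟨W, hW⟩ := S.Q_nonsingular.2 X
  have hc := S.f_cubed W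
  have hfx : S.f X = -(S.f (S.f (S.f W))) := by
    rw [← hW] at *
    linear_combination (norm := module) hc
  rw [hfx, map_neg, S.f_squared (S.f W), map_add, map_neg, S.eta_Q, map_sum]
  simp [S.eta_xi, Finset.sum_ite_eq]

lemma g_xi (k : Fin p) (X : V) : S.g X (S.ξ k) = S.η k X := by
  have h := S.compatible X (S.ξ k)
  rw [S.f_xi k, S.g_zero_right, S.Q_xi k] at h
  have hsum : (∑ j, S.η j X * S.η j (S.ξ k)) = S.η k X := by
    simp [S.eta_xi]
  rw [hsum] at h
  linear_combination -h

lemma top_f (W : V) : S.top (S.f W) = S.f W := by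
  unfold top
  simp [S.eta_f]

lemma top_zero : S.top (0 : V) = 0 := by
  unfold top; simp

lemma span_eta {v : V} (hv : v ∈ Submodule.span F (Set.range S.ξ)) :
    v = ∑ k, S.η k v • S.ξ k := by
  induction hv using Submodule.span_induction with
  | mem x hx =>
    obtain ⟨j, rfl⟩ := hx
    simp [S.eta_xi]
  | zero => simp
  | add x y _ _ hx hy =>
    simp only [map_add, add_smul, Finset.sum_add_distrib]
    rw [← hx, ← hy]
  | smul a x _ hx =>
    conv_lhs => rw [hx]
    rw [Finset.smul_sum]
    refine Finset.sum_congr rfl fun k _ => ?_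
    rw [map_smul, smul_eq_mul, mul_smul]

lemma lie_f_zero (hn : S.Normal) (ha : S.WeakAlmostS) (i : Fin p) (X : V) :
    S.lieD_f (S.ξ i) X = 0 := by
  -- Step A: f(f[X,ξ]) = f[fX,ξ]
  have hA : S.f (S.f (S.bracket X (S.ξ i))) = S.f (S.bracket (S.f X) (S.ξ i)) := by
    have h1 := hn X (S.ξ i)
    unfold N1 nijenhuis at h1
    have hd : ∀ k : Fin p, S.dEta k X (S.ξ i) = 0 := by
      intro k
      rw [ha k X (S.ξ i)]
      unfold Phi
      rw [S.f_xi i, S.g_zero_right]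
    simp only [hd, mul_zero, zero_smul, Finset.sum_const_zero, add_zero,
      S.f_xi i, S.bracket_zero_right, map_zero, add_zero, sub_zero] at h1
    linear_combination (norm := module) h1
  -- Step B: f (lieD_f ξ X) = 0
  have hB : S.f (S.lieD_f (S.ξ i) X) = 0 := by
    unfold lieD_f
    rw [map_sub]
    rw [S.bracket_antisymm (S.ξ i) (S.f X), S.bracket_antisymm (S.ξ i) X]
    rw [map_neg, map_neg, map_neg, hA]
    abel
  -- Step C/D: lieD_f ξ X ∈ span ξ and all η-components vanish
  have hC := S.span_eta (S.ker_f_spanned _ hB)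
  have hD : ∀ k : Fin p, S.η k (S.lieD_f (S.ξ i) X) = 0 := by
    intro k
    unfold lieD_f
    rw [map_sub, S.eta_f, sub_zero]
    -- use dη^k(ξ_i, fX) = Φ(ξ_i, fX) = 0
    have hphi : S.Phi (S.ξ i) (S.f X) = 0 := by
      unfold Phi
      rw [S.g_symm, S.g_xi i (S.f (S.f X))]
      exact S.eta_f i (S.f X)
    have heq := ha k (S.ξ i) (S.f X)
    rw [hphi] at heq
    unfold dEta at heq
    rw [S.eta_f k X, S.D_zero_right] at heq
    have hDeta : S.D (S.f X) (S.η k (S.ξ i)) = 0 := by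
      rw [S.eta_xi k i]
      by_cases h : k = i
      · simp only [h, if_pos rfl]
        rw [← map_one (algebraMap ℝ F)]
        exact S.D_algebraMap _ 1
      · simp only [if_neg h]
        exact S.D_zero_right _
    rw [hDeta] at heq
    have h2 : algebraMap ℝ F 2 * (algebraMap ℝ F (1/2) *
        (0 - 0 - S.η k (S.bracket (S.ξ i) (S.f X)))) = 0 := by rw [heq]; ring
    rw [← mul_assoc, ← map_mul] at h2
    norm_num at h2
    exact h2
  rw [hC]
  simp [hD]

lemma N5_xi_f (hn : S.Normal) (ha : S.WeakAlmostS) (i : Fin p) (X Y : V) :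
    S.N5 Y (S.ξ i) (S.f X) = 0 := by
  have hQt : S.Qt (S.ξ i) = 0 := by unfold Qt; rw [S.Q_xi i, sub_self]
  have hbr : S.bracket (S.ξ i) (S.f (S.f X)) = S.f (S.bracket (S.ξ i) (S.f X)) := by
    have h := S.lie_f_zero hn ha i (S.f X)
    unfold lieD_f at h
    linear_combination (norm := module) h
  unfold N5
  rw [hQt, S.g_zero_right, S.D_zero_right, S.g_zero_right,
    S.f_xi i, S.D_zero_left, S.bracket_zero_right, S.top_zero, S.g_zero_left,
    S.bracket_zero_right, S.top_zero, hbr, S.top_f]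
  simp [S.g_zero_left]

end Aux

end MetricWeakFStructure

open MetricWeakFStructure

/-- For a weak S-structure, for all vector fields `X, Y` and each `i`:
`N⁽⁵⁾(Y, ξᵢ, fX) - N⁽⁵⁾(X, ξᵢ, fY) = 2 g((hᵢ* f + f hᵢ) fX, fY)`. -/
theorem statement_11 {p : ℕ} {F V : Type*} [CommRing F] [PartialOrder F] [IsOrderedRing F] [Algebra ℝ F]
    [AddCommGroup V] [Module F V] (S : MetricWeakFStructure p F V)
    (hS : S.WeakS) (i : Fin p) (hs : V → V)
    (hadj : ∀ X Y : V, S.g (hs X) Y = S.g X (S.hT i Y)) :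
    ∀ X Y : V,
      S.N5 Y (S.ξ i) (S.f X) - S.N5 X (S.ξ i) (S.f Y) =
        2 * S.g (hs (S.f (S.f X)) + S.f (S.hT i (S.f X))) (S.f Y) := by
  intro X Y
  obtain ⟨⟨hn, -⟩, ha⟩ := hS
  have hT0 : ∀ Z : V, S.hT i Z = 0 := by
    intro Z
    unfold MetricWeakFStructure.hT MetricWeakFStructure.N3
    rw [S.lie_f_zero hn ha i Z, smul_zero]
  have hs0 : ∀ Z : V, hs Z = 0 := by
    intro Z
    apply S.g_definite
    rw [hadj, hT0, S.g_zero_right]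
  rw [S.N5_xi_f hn ha i X Y, S.N5_xi_f hn ha i Y X, hs0, hT0, map_zero, add_zero,
    S.g_zero_left, mul_zero, sub_self]
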